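/- Let Σ_a, Σ_b ⊆ M be closed acausal sets (no two distinct points related by ≼) with D(Σ_a) = D(Σ_b) = M and Σ_b ⊆ Σ_a ∪ I⁺(Σ_a). Let a ⊆ Σ_a be open in the subspace topology of Σ_a, set a' = Σ_a \ (a ∪ edge(a)), R = J⁺(Σ_a) ∩ J⁻(Σ_b), N = ∂I⁺(a) ∩ R, and b' = Σ_b ∩ D⁺(a' ∪ edge(a)). Then D(b' ∪ N) = M; that is, b' ∪ N is a Cauchy slice. (A step in the proof of the paper's main Theorem, showing the hybrid surface Σ = b' ∪ N is a Cauchy slice.) -/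

import Mathlib

open Set Metric

noncomputable section

/-- Spatial Euclidean factor. -/
abbrev E (n : ℕ) : Type := EuclideanSpace ℝ (Fin n)

/-- Minkowski spacetime `M = ℝ × E`. -/
abbrev M (n : ℕ) : Type := ℝ × E n

variable {n : ℕ}

/-- Chronological relation `p ≪ q`. -/
def chron (p q : M n) : Prop := dist p.2 q.2 < q.1 - p.1

/-- Causal relation `p ≼ q`. -/
def causal (p q : M n) : Prop := dist p.2 q.2 ≤ q.1 - p.1

/-- Chronological future `I⁺(S)`. -/
def Iplus (S : Set (M n)) : Set (M n) := {q | ∃ p ∈ S, chron p q}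

/-- Chronological past `I⁻(S)`. -/
def Iminus (S : Set (M n)) : Set (M n) := {q | ∃ p ∈ S, chron q p}

/-- `I(S) = I⁺(S) ∪ I⁻(S)`. -/
def Iboth (S : Set (M n)) : Set (M n) := Iplus S ∪ Iminus S

/-- Causal future `J⁺(S)`. -/
def Jplus (S : Set (M n)) : Set (M n) := {q | ∃ p ∈ S, causal p q}

/-- Causal past `J⁻(S)`. -/
def Jminus (S : Set (M n)) : Set (M n) := {q | ∃ p ∈ S, causal q p}

/-- A set is achronal if no two of its points are chronologically related. -/
def Achronal (S : Set (M n)) : Prop := ∀ p ∈ S, ∀ q ∈ S, ¬ chron p q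

/-- A set is acausal if no two distinct points of it are causally related. -/
def Acausal (S : Set (M n)) : Prop := ∀ p ∈ S, ∀ q ∈ S, p ≠ q → ¬ causal p q

/-- `edge(a)`: points `p ∈ closure a` such that every open neighborhood `O` of `p`
contains `q, r` with `r ≪ p ≪ q` together with a continuous timelike curve in `O`
from `r` to `q` avoiding `a`. -/
def edge (a : Set (M n)) : Set (M n) :=
  {p | p ∈ closure a ∧ ∀ O : Set (M n), IsOpen O → p ∈ O →
    ∃ q ∈ O, ∃ r ∈ O, chron r p ∧ chron p q ∧
      ∃ γ : ℝ → M n, ContinuousOn γ (Icc 0 1) ∧ γ 0 = r ∧ γ 1 = q ∧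
        (∀ s ∈ Icc (0:ℝ) 1, γ s ∈ O ∧ γ s ∉ a) ∧
        (∀ s ∈ Icc (0:ℝ) 1, ∀ t ∈ Icc (0:ℝ) 1, s < t → chron (γ s) (γ t))}

/-- A slice: a closed achronal set with empty edge. -/
def IsSlice (Sg : Set (M n)) : Prop := IsClosed Sg ∧ Achronal Sg ∧ edge Sg = ∅

/-- A hypersurface in the slice `Sg`: a subset open in the subspace topology of `Sg`. -/
def IsHypersurfaceIn (Sg a : Set (M n)) : Prop :=
  a ⊆ Sg ∧ IsOpen ((Subtype.val : Sg → M n) ⁻¹' a)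

/-- A hypersurface: subset of some slice, open in the slice's subspace topology. -/
def IsHypersurface (a : Set (M n)) : Prop := ∃ Sg, IsSlice Sg ∧ IsHypersurfaceIn Sg a

/-- The frontier (boundary) of `a` in the subspace topology of `Sg`,
viewed as a subset of spacetime. -/
def frontierIn (Sg a : Set (M n)) : Set (M n) :=
  (Subtype.val : Sg → M n) '' frontier ((Subtype.val : Sg → M n) ⁻¹' a)

/-- A future-infinite causal worldline: the graph `{(t, x t) : t ≥ t₀}` of a
1-Lipschitz map defined on `[t₀, ∞)`. -/
def IsWorldline (W : Set (M n)) : Prop :=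
  ∃ t₀ : ℝ, ∃ x : ℝ → E n, LipschitzOnWith 1 x (Ici t₀) ∧
    W = {p : M n | t₀ ≤ p.1 ∧ p.2 = x p.1}

/-- Domain of dependence `D(S)`: points through which every inextendible causal
curve (graph of a 1-Lipschitz map `ℝ → E`) meets `S`. -/
def Dom (S : Set (M n)) : Set (M n) :=
  {p | ∀ x : ℝ → E n, LipschitzWith 1 x → x p.1 = p.2 → ∃ t : ℝ, (t, x t) ∈ S}

/-- Future domain of dependence `D⁺(S)`: every inextendible causal curve through `p`
meets `S` at some time `t ≤ p.1`. -/
def DomPlus (S : Set (M n)) : Set (M n) :=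
  {p | ∀ x : ℝ → E n, LipschitzWith 1 x → x p.1 = p.2 →
    ∃ t : ℝ, t ≤ p.1 ∧ (t, x t) ∈ S}

/-- A `C¹` function has timelike gradient if at every point `∂T/∂t > ‖∇_E T‖`. -/
def TimelikeGrad (T : M n → ℝ) : Prop :=
  ∀ p : M n,
    ‖(fderiv ℝ T p).comp (ContinuousLinearMap.inr ℝ ℝ (E n))‖ <
      fderiv ℝ T p ((1 : ℝ), (0 : E n))

/-- A past directed outward null deformation of the hypersurface `a` within the
open set `O`. -/
def IsPastOutwardNullDeformation (a O b : Set (M n)) : Prop :=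
  IsHypersurface b ∧ Dom a ⊆ Dom b ∧ b ⊆ closure (Iminus a) ∧
  symmDiff a b ⊆ O ∧ edge b ⊆ edge a ∪ ((frontier (Iminus a) \ a) ∩ O)

/-!
A causal curve `t ↦ (t, x t)` meets `Σ_b` at `P_b = (t_b, x t_b)`. If `P_b ∈ I⁺(a)`, the curve
meets `Σ_a` at an earlier time `t_a` (achronality of `Σ_a ⊇ a`) at a point outside `I⁺(a)`, so on
`[t_a, t_b]` it crosses `∂I⁺(a)`, and the crossing lies in `R`. Otherwise, either `P_b ∈ b'`, or some
causal curve through `P_b` avoids `a' ∪ edge(a) ⊇ Σ_a \ a` in the past of `P_b`; as `P_b` lies in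
`D⁺(Σ_a)` by acausality, that curve meets `a`, so `P_b ∈ J⁺(a) \ I⁺(a) ⊆ ∂I⁺(a)`, and `P_b ∈ R`.
-/

open Filter Topology

lemma causal_refl (p : M n) : causal p p := by simp [causal]

lemma causal_of_chron {p q : M n} (h : chron p q) : causal p q := h.le

lemma chron.fst_lt {p q : M n} (h : chron p q) : p.1 < q.1 := by
  unfold chron at h
  linarith [dist_nonneg (x := p.2) (y := q.2)]

lemma chron_of_chron_of_causal {p q r : M n} (hpq : chron p q) (hqr : causal q r) : chron p r := by
  unfold chron causal at *
  linarith [dist_triangle p.2 q.2 r.2]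

lemma causal_of_lipschitzWith {x : ℝ → E n} (hx : LipschitzWith 1 x) {s t : ℝ} (hst : s ≤ t) :
    causal (s, x s) (t, x t) := by
  have h := hx.dist_le_mul s t
  rw [NNReal.coe_one, one_mul, Real.dist_eq, abs_of_nonpos (sub_nonpos.2 hst)] at h
  unfold causal
  linarith

lemma Iplus_mono {S T : Set (M n)} (h : S ⊆ T) : Iplus S ⊆ Iplus T :=
  fun _ ⟨p, hp, hpq⟩ => ⟨p, h hp, hpq⟩

lemma Jplus_mono {S T : Set (M n)} (h : S ⊆ T) : Jplus S ⊆ Jplus T :=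
  fun _ ⟨p, hp, hpq⟩ => ⟨p, h hp, hpq⟩

lemma Jplus_subset_closure_Iplus (S : Set (M n)) : Jplus S ⊆ closure (Iplus S) := by
  rintro p ⟨q, hq, hqp⟩
  have hlim : Tendsto (fun ε : ℝ => ((p.1 + ε, p.2) : M n)) (𝓝[>] 0) (𝓝 p) := by
    have : Continuous fun ε : ℝ => ((p.1 + ε, p.2) : M n) := by fun_prop
    simpa using (this.tendsto 0).mono_left nhdsWithin_le_nhds
  refine mem_closure_of_tendsto hlim (eventually_nhdsWithin_of_forall fun ε (hε : 0 < ε) => ?_)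
  refine ⟨q, hq, ?_⟩
  unfold causal at hqp
  unfold chron
  linarith

lemma Jplus_diff_Iplus_subset_frontier (S : Set (M n)) :
    Jplus S \ Iplus S ⊆ frontier (Iplus S) :=
  fun _ ⟨hJ, hI⟩ => ⟨Jplus_subset_closure_Iplus S hJ, fun h => hI (interior_subset h)⟩

lemma Acausal.achronal {S : Set (M n)} (hS : Acausal S) : Achronal S :=
  fun p hp q hq h => hS p hp q hq (fun hpq => (lt_irrefl p.1) (hpq ▸ h.fst_lt)) (causal_of_chron h)

lemma Achronal.not_causal_of_mem_Iplus {S : Set (M n)} (hS : Achronal S) {p q : M n}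
    (hp : p ∈ Iplus S) (hq : q ∈ S) : ¬ causal p q :=
  fun hpq => hp.elim fun r ⟨hr, hrp⟩ => hS r hr q hq (chron_of_chron_of_causal hrp hpq)

lemma Acausal.eq_of_causal {S : Set (M n)} (hS : Acausal S) {p q : M n}
    (hp : p ∈ S ∪ Iplus S) (hq : q ∈ S) (hpq : causal p q) : p = q := by
  rcases hp with hp | hp
  · exact not_not.1 fun hne => hS p hp q hq hne hpq
  · exact absurd hpq (hS.achronal.not_causal_of_mem_Iplus hp hq)

lemma DomPlus_mono {S T : Set (M n)} (h : S ⊆ T) : DomPlus S ⊆ DomPlus T := by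
  intro p hp x hx hxp
  obtain ⟨t, htp, ht⟩ := hp x hx hxp
  exact ⟨t, htp, h ht⟩

lemma Acausal.mem_DomPlus {S : Set (M n)} (hS : Acausal S) {p : M n} (hpD : p ∈ Dom S)
    (hp : p ∈ S ∪ Iplus S) : p ∈ DomPlus S := by
  intro x hx hxp
  obtain ⟨s, hs⟩ := hpD x hx hxp
  refine ⟨s, le_of_not_gt fun hps => ?_, hs⟩
  have hcausal := causal_of_lipschitzWith hx hps.le
  rw [hxp] at hcausal
  exact hps.ne (congrArg Prod.fst (hS.eq_of_causal hp hs hcausal))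

lemma DomPlus_diff_DomPlus_diff_subset_Jplus (S a : Set (M n)) :
    DomPlus S \ DomPlus (S \ a) ⊆ Jplus a := by
  rintro p ⟨hpS, hpSa⟩
  simp only [DomPlus, mem_ofPred_eq, not_forall, not_exists, not_and] at hpSa
  obtain ⟨y, hy, hyp, hyavoid⟩ := hpSa
  obtain ⟨s, hsp, hs⟩ := hpS y hy hyp
  have hsa : (s, y s) ∈ a := not_not.1 fun hna => hyavoid s hsp ⟨hs, hna⟩
  have hcausal := causal_of_lipschitzWith hy hsp
  rw [hyp] at hcausal
  exact ⟨_, hsa, hcausal⟩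

lemma exists_mem_Icc_mem_frontier {X : Type*} [TopologicalSpace X] {f : ℝ → X}
    (hf : Continuous f) {U : Set X} {a b : ℝ} (hab : a ≤ b) (ha : f a ∉ U) (hb : f b ∈ U) :
    ∃ t ∈ Icc a b, f t ∈ frontier U := by
  set g : ℝ → X := fun t => f (projIcc a b hab t)
  have hg : Continuous g := hf.comp (continuous_subtype_val.comp continuous_projIcc)
  obtain ⟨t, ht⟩ := (nonempty_frontier_iff (s := g ⁻¹' U)).2
    ⟨⟨b, by simpa only [g, mem_preimage, projIcc_right] using hb⟩, fun h => ha <| by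
      have hmem : a ∈ g ⁻¹' U := by rw [h]; exact mem_univ a
      simpa only [g, mem_preimage, projIcc_left] using hmem⟩
  exact ⟨_, (projIcc a b hab t).2, hg.frontier_preimage_subset U ht⟩

lemma Achronal.exists_mem_frontier_Iplus {S a : Set (M n)} (hS : Achronal S) (ha : a ⊆ S)
    {x : ℝ → E n} (hx : LipschitzWith 1 x) {ta tb : ℝ} (hta : (ta, x ta) ∈ S)
    (htb : (tb, x tb) ∈ Iplus a) : ∃ t ∈ Icc ta tb, (t, x t) ∈ frontier (Iplus a) := by
  have hle : ta ≤ tb := le_of_not_gt fun h =>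
    hS.not_causal_of_mem_Iplus (Iplus_mono ha htb) hta (causal_of_lipschitzWith hx h.le)
  have hta' : (ta, x ta) ∉ Iplus a := fun h =>
    hS.not_causal_of_mem_Iplus (Iplus_mono ha h) hta (causal_refl _)
  exact exists_mem_Icc_mem_frontier (continuous_id.prodMk hx.continuous) hle hta' htb

theorem stmt14_general {n : ℕ} (Sa Sb a : Set (M n))
    (hSaA : Acausal Sa)
    (hDa : Dom Sa = univ) (hDb : Dom Sb = univ)
    (hfut : Sb ⊆ Sa ∪ Iplus Sa)
    (haSub : a ⊆ Sa) :
    Dom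
      ((Sb ∩ DomPlus ((Sa \ (a ∪ edge a)) ∪ edge a)) ∪
        (frontier (Iplus a) ∩ (Jplus Sa ∩ Jminus Sb))) = univ := by
  refine eq_univ_of_forall fun p x hx _ => ?_
  obtain ⟨tb, htb⟩ := (hDb ▸ mem_univ (p.1, x p.1) : _ ∈ Dom Sb) x hx rfl
  by_cases hI : (tb, x tb) ∈ Iplus a
  · obtain ⟨ta, hta⟩ := (hDa ▸ mem_univ (p.1, x p.1) : _ ∈ Dom Sa) x hx rfl
    obtain ⟨t, ⟨hta_t, ht_tb⟩, hfr⟩ := hSaA.achronal.exists_mem_frontier_Iplus haSub hx hta hI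
    exact ⟨t, Or.inr ⟨hfr, ⟨_, hta, causal_of_lipschitzWith hx hta_t⟩,
      ⟨_, htb, causal_of_lipschitzWith hx ht_tb⟩⟩⟩
  by_cases hD : (tb, x tb) ∈ DomPlus ((Sa \ (a ∪ edge a)) ∪ edge a)
  · exact ⟨tb, Or.inl ⟨htb, hD⟩⟩
  have hsub : Sa \ a ⊆ (Sa \ (a ∪ edge a)) ∪ edge a := by
    intro q hq
    by_cases he : q ∈ edge a
    exacts [Or.inr he, Or.inl ⟨hq.1, fun h => h.elim hq.2 he⟩]
  have hJ : (tb, x tb) ∈ Jplus a := DomPlus_diff_DomPlus_diff_subset_Jplus Sa a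
    ⟨hSaA.mem_DomPlus (hDa ▸ mem_univ _) (hfut htb), fun h => hD (DomPlus_mono hsub h)⟩
  exact ⟨tb, Or.inr ⟨Jplus_diff_Iplus_subset_frontier a ⟨hJ, hI⟩, Jplus_mono haSub hJ,
    ⟨_, htb, causal_refl _⟩⟩⟩

/-- The hybrid surface `b' ∪ N` is a Cauchy slice:
`D(b' ∪ N) = M`. -/
theorem stmt14 {n : ℕ} (hn : 0 < n) (Sa Sb a : Set (M n))
    (hSa : IsClosed Sa) (hSaA : Acausal Sa)
    (hSb : IsClosed Sb) (hSbA : Acausal Sb)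
    (hDa : Dom Sa = univ) (hDb : Dom Sb = univ)
    (hfut : Sb ⊆ Sa ∪ Iplus Sa)
    (haSub : a ⊆ Sa) (haOpen : IsOpen ((Subtype.val : Sa → M n) ⁻¹' a)) :
    Dom
      ((Sb ∩ DomPlus ((Sa \ (a ∪ edge a)) ∪ edge a)) ∪
        (frontier (Iplus a) ∩ (Jplus Sa ∩ Jminus Sb))) = univ :=
  stmt14_general Sa Sb a hSaA hDa hDb hfut haSub

end
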